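/- arXiv:1901.05067 — 8 statements merged into one kernel-verified Lean document; each statement's English description precedes it below -/
import Mathlib

section
/- If a local function f : Q^V → ℝ on a periodic d-dimensional grid (all side lengths > 4) is number-conserving, i.e., the sum of cell states is preserved by the induced global map for every configuration, then every state q ∈ Q is quiescent: f(H_q) = q, where H_q is the homogeneous neighborhood configuration assigning q to every direction in V. -/
/-- Directions of the von Neumann neighborhood: `none` is the zero vector,
`some (k, b)` is `e_k` if `b = true` and `-e_k` if `b = false`. -/
abbrev Dir (d : ℕ) := Option (Fin d × Bool)

/-- The opposite direction. -/
def negDir {d : ℕ} : Dir d → Dir d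
  | none => none
  | some (k, b) => some (k, !b)

/-- The integer vector corresponding to a direction. -/
def dirVec {d : ℕ} : Dir d → Fin d → ℤ
  | none => fun _ => 0
  | some (k, b) => fun j => if j = k then (if b then 1 else -1) else 0

/-- The `d`-dimensional torus with side lengths `n k`. -/
abbrev Cell (d : ℕ) (n : Fin d → ℕ) := ∀ k, ZMod (n k)

/-- Translation of a cell by an integer vector (componentwise mod `n k`). -/
def cellAdd {d : ℕ} {n : Fin d → ℕ} (i : Cell d n) (v : Fin d → ℤ) : Cell d n :=
  fun k => i k + (v k : ZMod (n k))

/-- The von Neumann neighborhood of a cell, as a set of cells. -/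
def nbhdSet {d : ℕ} {n : Fin d → ℕ} (i : Cell d n) : Set (Cell d n) :=
  {c | ∃ v : Dir d, c = cellAdd i (dirVec v)}

/-- The neighborhood configuration of cell `i` in configuration `x`. -/
def nbhd {d : ℕ} {n : Fin d → ℕ} {α : Type*} (x : Cell d n → α) (i : Cell d n) :
    Dir d → α :=
  fun v => x (cellAdd i (dirVec v))

/-- The monomer `M_{v:q}`: value `q` in direction `v`, zero elsewhere. -/
def monomer {d : ℕ} (v : Dir d) (q : ℝ) : Dir d → ℝ :=
  fun u => if u = v then q else 0

/-- The dimer `D(u:p, w:q)`: value `p` in direction `u`, `q` in direction `w`,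
zero elsewhere. -/
def dimer {d : ℕ} (u : Dir d) (p : ℝ) (w : Dir d) (q : ℝ) : Dir d → ℝ :=
  fun v => if v = u then p else if v = w then q else 0

/-- `f` is number-conserving: on every torus with all side lengths `> 4` the
induced global map preserves the sum of states, for `Q`-valued configurations. -/
def NumberConserving {d : ℕ} (Q : Set ℝ) (f : (Dir d → ℝ) → ℝ) : Prop :=
  ∀ (n : Fin d → ℕ) (hn : ∀ k, 4 < n k) (x : Cell d n → ℝ), (∀ i, x i ∈ Q) →
    haveI : ∀ k, NeZero (n k) := fun k => ⟨by have := hn k; omega⟩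
    ∑ i, f (nbhd x i) = ∑ i, x i

/-- Split function: (S1), (S2) and (S3). -/
def SplitFunction {d : ℕ} (Q : Set ℝ) (h : (Dir d → ℝ) → ℝ) : Prop :=
  (∀ (v : Dir d) (q : ℝ), q ∈ Q → h (monomer v q) ∈ Q) ∧
  (∀ q : ℝ, q ∈ Q → ∑ v : Dir d, h (monomer v q) = q) ∧
  (∀ N : Dir d → ℝ, (∀ v, N v ∈ Q) → h N = ∑ v : Dir d, h (monomer v (N v)))

/-- Perturbation: vanishes on monomers (P1), and its global map sends every
configuration to a zero-sum configuration (P2). -/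
def Perturbation {d : ℕ} (Q : Set ℝ) (g : (Dir d → ℝ) → ℝ) : Prop :=
  (∀ (v : Dir d) (q : ℝ), q ∈ Q → g (monomer v q) = 0) ∧
  ∀ (n : Fin d → ℕ) (hn : ∀ k, 4 < n k) (x : Cell d n → ℝ), (∀ i, x i ∈ Q) →
    haveI : ∀ k, NeZero (n k) := fun k => ⟨by have := hn k; omega⟩
    ∑ i, g (nbhd x i) = 0

/-- The defining condition of the set `Ω` of admissible pairs of directions. -/
def OmegaPair {d : ℕ} (u w : Dir d) : Prop :=
  (u = none ∧ w ≠ none) ∨ (u ≠ none ∧ w ≠ none ∧ u ≠ w ∧ u ≠ negDir w)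

/-- If a local function is number-conserving, then every state is quiescent:
`f(H_q) = q` for the homogeneous neighborhood configuration `H_q`. -/
theorem numberConserving_quiescent
    (d : ℕ) (hd : 1 ≤ d) (Q : Set ℝ) (h0 : (0 : ℝ) ∈ Q) (hQ : ∃ r ∈ Q, r ≠ 0)
    (f : (Dir d → ℝ) → ℝ) (hf : NumberConserving Q f)
    (q : ℝ) (hq : q ∈ Q) :
    f (fun _ => q) = q := by
  have hf5 := hf (fun _ => 5) (fun k => by norm_num) (fun _ => q) (fun _ => hq)
  haveI : ∀ k : Fin d, NeZero ((fun _ : Fin d => 5) k) := fun k => ⟨by norm_num⟩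
  have hnb : ∀ i : Cell d (fun _ => 5), nbhd (fun _ => q) i = fun _ => q := by
    intro i; funext v; rfl
  simp only [hnb] at hf5
  rw [Finset.sum_const, Finset.sum_const] at hf5
  have hcard : (Finset.univ : Finset (Cell d (fun _ => 5))).card ≠ 0 := by
    simp [Finset.card_univ]
  rw [nsmul_eq_mul, nsmul_eq_mul] at hf5
  exact mul_left_cancel₀ (by exact_mod_cast hcard) hf5
end

section
/- If a local function f : Q^V → ℝ on a periodic d-dimensional grid (all side lengths > 4) is number-conserving, then for every q ∈ Q the sum over all directions v ∈ V of f applied to the monomer M_{v:q} equals q, i.e., Σ_{v∈V} f(M_{v:q}) = q. -/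
lemma dirVec_inj5 {d : ℕ} : ∀ u v : Dir d,
    (∀ k, ((dirVec u k : ZMod 5)) = ((dirVec v k : ZMod 5))) → u = v := by
  have h1 : ((1 : ℤ) : ZMod 5) ≠ ((0 : ℤ) : ZMod 5) := by push_cast; decide
  have h2 : ((-1 : ℤ) : ZMod 5) ≠ ((0 : ℤ) : ZMod 5) := by push_cast; decide
  have h3 : ((1 : ℤ) : ZMod 5) ≠ ((-1 : ℤ) : ZMod 5) := by push_cast; decide
  rintro (_ | ⟨j, b⟩) (_ | ⟨j', b'⟩) h
  · rfl
  · exfalso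
    have := (h j').symm
    simp only [dirVec, if_pos rfl] at this
    cases b' <;> simp_all
  · exfalso
    have := h j
    simp only [dirVec, if_pos rfl] at this
    cases b <;> simp_all
  · have hj : j' = j := by
      by_contra hne
      have := h j'
      simp only [dirVec, if_pos rfl, if_neg hne] at this
      cases b' <;> simp_all
    subst hj
    have := h j'
    simp only [dirVec, if_pos rfl] at this
    cases b <;> cases b' <;> simp_all

/-- If a local function is number-conserving, then for every state `q` the sum
of its values on the monomers `M_{v:q}` over all directions `v` equals `q`. -/
theorem numberConserving_monomer_sum
    (d : ℕ) (hd : 1 ≤ d) (Q : Set ℝ) (h0 : (0 : ℝ) ∈ Q)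
    (f : (Dir d → ℝ) → ℝ) (hf : NumberConserving Q f)
    (q : ℝ) (hq : q ∈ Q) :
    ∑ v : Dir d, f (monomer v q) = q := by
  classical
  have hn : ∀ k : Fin d, 4 < (fun _ : Fin d => 5) k := fun _ => by norm_num
  haveI : ∀ k : Fin d, NeZero ((fun _ : Fin d => 5) k) := fun k => ⟨by have := hn k; omega⟩
  -- f vanishes on the zero neighborhood
  have hf0 : f (fun _ => 0) = 0 := by
    have hz := hf (fun _ => 5) hn (fun _ => 0) (fun _ => h0)
    have hz' : (∑ _i : Cell d (fun _ => 5), f (fun _ => (0 : ℝ)))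
        = ∑ _i : Cell d (fun _ => 5), (0 : ℝ) := hz
    rw [Finset.sum_const, Finset.sum_const_zero, nsmul_eq_mul] at hz'
    have hcard : (0 : ℝ) < (Finset.univ : Finset (Cell d (fun _ => 5))).card := by
      exact_mod_cast Finset.card_pos.mpr ⟨0, Finset.mem_univ 0⟩
    rcases mul_eq_zero.mp hz' with h | h
    · exact absurd h (ne_of_gt hcard)
    · exact h
  set x : Cell d (fun _ => 5) → ℝ := fun i => if i = 0 then q else 0 with hx_def
  have hx := hf (fun _ => 5) hn x
    (fun i => by by_cases hi : i = 0 <;> simp [hx_def, hi, hq, h0])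
  have hrhs : ∑ i, x i = q := by
    simp [hx_def, Finset.sum_ite_eq']
  set ι : Dir d → Cell d (fun _ => 5) := fun v k => ((-(dirVec v k) : ℤ) : ZMod 5)
    with hι_def
  have hι_inj : Function.Injective ι := by
    intro u v huv
    refine dirVec_inj5 u v fun k => ?_
    have := congrFun huv k
    simp only [hι_def, Int.cast_neg, neg_inj] at this
    exact this
  have hcell : ∀ (u v : Dir d), cellAdd (ι v) (dirVec u) = 0 ↔ u = v := by
    intro u v
    constructor
    · intro hc
      refine dirVec_inj5 u v fun k => ?_
      have := congrFun hc k
      simp only [cellAdd, hι_def, Int.cast_neg, Pi.zero_apply] at this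
      linear_combination (this : _)
    · rintro rfl
      funext k
      simp [cellAdd, hι_def]
  have hnb1 : ∀ v, nbhd x (ι v) = monomer v q := by
    intro v
    funext u
    simp only [nbhd, monomer, hx_def]
    by_cases huv : u = v
    · rw [if_pos ((hcell u v).mpr huv), if_pos huv]
    · rw [if_neg (fun hc => huv ((hcell u v).mp hc)), if_neg huv]
  have hnb2 : ∀ i : Cell d (fun _ => 5), i ∉ Finset.univ.image ι →
      nbhd x i = fun _ => 0 := by
    intro i hi
    funext u
    simp only [nbhd, hx_def]
    rw [if_neg]
    intro hc
    apply hi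
    refine Finset.mem_image.mpr ⟨u, Finset.mem_univ u, ?_⟩
    funext k
    have := congrFun hc k
    simp only [cellAdd, Pi.zero_apply] at this
    simp only [hι_def, Int.cast_neg]
    exact (eq_neg_of_add_eq_zero_left this).symm
  calc ∑ v : Dir d, f (monomer v q)
      = ∑ i ∈ Finset.univ.image ι, f (nbhd x i) := by
        rw [Finset.sum_image (fun a _ b _ h => hι_inj h)]
        exact Finset.sum_congr rfl fun v _ => by rw [hnb1 v]
    _ = ∑ i, f (nbhd x i) := by
        refine Finset.sum_subset (Finset.subset_univ _) fun i _ hi => ?_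
        rw [hnb2 i hi, hf0]
    _ = ∑ i, x i := hx
    _ = q := hrhs
end

section
/- Every split function is number-conserving: if h : Q^V → ℝ satisfies (S2) Σ_{v∈V} h(M_{v:q}) = q for all q ∈ Q and (S3) h(N) = Σ_{v∈V} h(M_{v:N(v)}) for every neighborhood configuration N, then σ(A_h(x)) = σ(x) for every configuration x on the periodic grid, where σ denotes the sum over all cells. -/
/-- Every split function is number-conserving: properties (S2) and (S3) imply
that the induced global map preserves the sum of states on every torus with
side lengths `> 4`. -/
theorem splitFunction_conserves
    (d : ℕ) (hd : 1 ≤ d) (Q : Set ℝ) (h0 : (0 : ℝ) ∈ Q)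
    (h : (Dir d → ℝ) → ℝ)
    (hS2 : ∀ q : ℝ, q ∈ Q → ∑ v : Dir d, h (monomer v q) = q)
    (hS3 : ∀ N : Dir d → ℝ, (∀ v, N v ∈ Q) →
      h N = ∑ v : Dir d, h (monomer v (N v))) :
    NumberConserving Q h := by
  intro n hn x hx
  haveI : ∀ k, NeZero (n k) := fun k => ⟨by have := hn k; omega⟩
  calc ∑ i, h (nbhd x i)
      = ∑ i, ∑ v : Dir d, h (monomer v (x (cellAdd i (dirVec v)))) :=
        Finset.sum_congr rfl (fun i _ => hS3 _ (fun v => hx _))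
    _ = ∑ v : Dir d, ∑ i, h (monomer v (x (cellAdd i (dirVec v)))) := Finset.sum_comm
    _ = ∑ v : Dir d, ∑ i, h (monomer v (x i)) := by
        refine Finset.sum_congr rfl fun v _ => ?_
        refine Fintype.sum_equiv
          (Equiv.addRight (fun k => ((dirVec v k : ℤ) : ZMod (n k)))) _ _ fun i => ?_
        congr 1
    _ = ∑ i, ∑ v : Dir d, h (monomer v (x i)) := Finset.sum_comm
    _ = ∑ i, x i := Finset.sum_congr rfl fun i _ => hS2 _ (hx i)
end

section
/- If g is a perturbation (g vanishes on all monomers and σ(A_g(x)) = 0 for all configurations x on the torus with side lengths > 4), then for every pair {u, w} ∈ Ω and all p, q ∈ Q, g(D(u:p, w:q)) = -g(D(-w:p, -u:q)), where D(u:p, w:q) denotes the dimer neighborhood configuration with value p in direction u, value q in direction w, and 0 elsewhere. -/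
section Aux
variable {d : ℕ}

private lemma dirVec_bound (v : Dir d) (k : Fin d) : -1 ≤ dirVec v k ∧ dirVec v k ≤ 1 := by
  rcases v with _ | ⟨j, b⟩ <;> simp only [dirVec] <;> [omega; (split_ifs <;> omega)]

private lemma negDir_negDir (v : Dir d) : negDir (negDir v) = v := by
  rcases v with _ | ⟨j, b⟩ <;> simp [negDir]

private lemma dirVec_negDir (v : Dir d) (k : Fin d) : dirVec (negDir v) k = - dirVec v k := by
  rcases v with _ | ⟨j, b⟩ <;> simp only [negDir, dirVec]
  · ring
  · rcases b <;> simp <;> split_ifs <;> ring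

private lemma dirVec_inj {a b : Dir d} (h : ∀ k, dirVec a k = dirVec b k) : a = b := by
  rcases a with _ | ⟨j, x⟩ <;> rcases b with _ | ⟨j', x'⟩
  · rfl
  · have := h j'; simp [dirVec] at this; rcases x' <;> simp_all
  · have := h j; simp [dirVec] at this; rcases x <;> simp_all
  · by_cases e : j = j'
    · subst e; have := h j; simp [dirVec] at this; rcases x <;> rcases x' <;> simp_all
    · have h1 := h j; have h2 := h j'
      simp [dirVec, e, Ne.symm e] at h1 h2
      rcases x <;> simp at h1

end Aux



section Key
variable {d : ℕ}

private lemma key {u w v1 v2 : Dir d} (hne : u ≠ w) (hneg : u ≠ negDir w)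
    (h : ∀ k, dirVec v1 k - dirVec v2 k = dirVec u k - dirVec w k) :
    (v1 = u ∧ v2 = w) ∨ (v1 = negDir w ∧ v2 = negDir u) := by
  rcases u with _ | ⟨ku, bu⟩ <;> rcases w with _ | ⟨kw, bw⟩
  · exact absurd rfl hne
  · -- u = none, w = some
    rcases v1 with _ | ⟨k1, b1⟩ <;> rcases v2 with _ | ⟨k2, b2⟩
    · exfalso; have h1 := h kw
      simp only [dirVec, if_pos rfl, if_true, eq_self_iff_true] at h1
      rcases bw <;> simp at h1
    · left
      refine ⟨rfl, dirVec_inj fun k => ?_⟩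
      have h1 := h k; simp only [dirVec] at h1 ⊢; omega
    · right
      refine ⟨dirVec_inj fun k => ?_, rfl⟩
      have h1 := h k; rw [dirVec_negDir]
      simp only [dirVec] at h1 ⊢; omega
    · exfalso
      by_cases e1 : k1 = kw <;> by_cases e2 : k2 = kw
      · have a1 : kw = k1 := e1.symm
        have a2 : kw = k2 := e2.symm
        have h1 := h kw
        simp only [dirVec, if_pos rfl, if_pos a1, if_pos a2, if_true,
          eq_self_iff_true] at h1
        rcases b1 <;> rcases b2 <;> rcases bw <;> simp at h1 <;> omega
      · have a1 : ¬ k2 = k1 := fun hh => e2 (hh.trans e1)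
        have h1 := h k2
        simp only [dirVec, if_pos rfl, if_neg a1, if_neg e2, if_true,
          eq_self_iff_true] at h1
        rcases b2 <;> simp at h1
      · have a2 : ¬ k1 = k2 := fun hh => e1 (hh.trans e2)
        have h1 := h k1
        simp only [dirVec, if_pos rfl, if_neg a2, if_neg e1, if_true,
          eq_self_iff_true] at h1
        rcases b1 <;> simp at h1
      · have a1 : ¬ kw = k1 := fun hh => e1 hh.symm
        have a2 : ¬ kw = k2 := fun hh => e2 hh.symm
        have h1 := h kw
        simp only [dirVec, if_pos rfl, if_neg a1, if_neg a2, if_true,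
          eq_self_iff_true] at h1
        rcases bw <;> simp at h1
  · -- u = some, w = none
    rcases v1 with _ | ⟨k1, b1⟩ <;> rcases v2 with _ | ⟨k2, b2⟩
    · exfalso; have h1 := h ku
      simp only [dirVec, if_pos rfl, if_true, eq_self_iff_true] at h1
      rcases bu <;> simp at h1
    · right
      refine ⟨rfl, dirVec_inj fun k => ?_⟩
      have h1 := h k; rw [dirVec_negDir]
      simp only [dirVec] at h1 ⊢; omega
    · left
      refine ⟨dirVec_inj fun k => ?_, rfl⟩
      have h1 := h k; simp only [dirVec] at h1 ⊢; omega
    · exfalso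
      by_cases e1 : k1 = ku <;> by_cases e2 : k2 = ku
      · have a1 : ku = k1 := e1.symm
        have a2 : ku = k2 := e2.symm
        have h1 := h ku
        simp only [dirVec, if_pos rfl, if_pos a1, if_pos a2, if_true,
          eq_self_iff_true] at h1
        rcases b1 <;> rcases b2 <;> rcases bu <;> simp at h1 <;> omega
      · have a1 : ¬ k2 = k1 := fun hh => e2 (hh.trans e1)
        have h1 := h k2
        simp only [dirVec, if_pos rfl, if_neg a1, if_neg e2, if_true,
          eq_self_iff_true] at h1
        rcases b2 <;> simp at h1
      · have a2 : ¬ k1 = k2 := fun hh => e1 (hh.trans e2)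
        have h1 := h k1
        simp only [dirVec, if_pos rfl, if_neg a2, if_neg e1, if_true,
          eq_self_iff_true] at h1
        rcases b1 <;> simp at h1
      · have a1 : ¬ ku = k1 := fun hh => e1 hh.symm
        have a2 : ¬ ku = k2 := fun hh => e2 hh.symm
        have h1 := h ku
        simp only [dirVec, if_pos rfl, if_neg a1, if_neg a2, if_true,
          eq_self_iff_true] at h1
        rcases bu <;> simp at h1
  · -- u = some, w = some
    have hkk : ku ≠ kw := by
      rintro rfl
      rcases bu <;> rcases bw <;> simp_all [negDir]
    rcases v1 with _ | ⟨k1, b1⟩ <;> rcases v2 with _ | ⟨k2, b2⟩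
    · exfalso; have h1 := h ku
      simp only [dirVec, if_pos rfl, if_neg hkk, if_true, eq_self_iff_true] at h1
      rcases bu <;> simp at h1
    · exfalso
      by_cases e2 : k2 = ku
      · have a1 : ¬ kw = k2 := fun hh => hkk (hh.trans e2).symm
        have a2 : ¬ kw = ku := fun hh => hkk hh.symm
        have h1 := h kw
        simp only [dirVec, if_pos rfl, if_neg a1, if_neg a2, if_true,
          eq_self_iff_true] at h1
        rcases bw <;> simp at h1
      · have a1 : ¬ ku = k2 := fun hh => e2 hh.symm
        have h1 := h ku
        simp only [dirVec, if_pos rfl, if_neg a1, if_neg hkk, if_true,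
          eq_self_iff_true] at h1
        rcases bu <;> simp at h1
    · exfalso
      by_cases e1 : k1 = ku
      · have a1 : ¬ kw = k1 := fun hh => hkk (hh.trans e1).symm
        have a2 : ¬ kw = ku := fun hh => hkk hh.symm
        have h1 := h kw
        simp only [dirVec, if_pos rfl, if_neg a1, if_neg a2, if_true,
          eq_self_iff_true] at h1
        rcases bw <;> simp at h1
      · have a1 : ¬ ku = k1 := fun hh => e1 hh.symm
        have h1 := h ku
        simp only [dirVec, if_pos rfl, if_neg a1, if_neg hkk, if_true,
          eq_self_iff_true] at h1
        rcases bu <;> simp at h1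
    · -- all four some
      by_cases e12 : k1 = k2
      · exfalso
        by_cases e1 : k1 = ku
        · have a1 : ¬ kw = k1 := fun hh => hkk (hh.trans e1).symm
          have a2 : ¬ kw = k2 := fun hh => hkk ((hh.trans e12.symm).trans e1).symm
          have a3 : ¬ kw = ku := fun hh => hkk hh.symm
          have h1 := h kw
          simp only [dirVec, if_pos rfl, if_neg a1, if_neg a2, if_neg a3, if_true,
            eq_self_iff_true] at h1
          rcases bw <;> simp at h1
        · have a1 : ¬ ku = k1 := fun hh => e1 hh.symm
          have a2 : ¬ ku = k2 := fun hh => e1 (e12.trans hh.symm)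
          have h1 := h ku
          simp only [dirVec, if_pos rfl, if_neg a1, if_neg a2, if_neg hkk, if_true,
            eq_self_iff_true] at h1
          rcases bu <;> simp at h1
      · by_cases c1 : k1 = ku
        · left
          have hw1 : ¬ k1 = kw := fun hh => hkk (c1.symm.trans hh)
          have h1 := h k1
          simp only [dirVec, if_pos rfl, if_pos c1, if_neg e12, if_neg hw1, if_true,
            eq_self_iff_true] at h1
          have hb1 : b1 = bu := by rcases b1 <;> rcases bu <;> simp at h1 ⊢
          have hk2 : k2 = kw := by
            by_contra hc
            have n1 : ¬ k2 = k1 := fun hh => e12 hh.symm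
            have n2 : ¬ k2 = ku := fun hh => e12 (c1.trans hh.symm)
            have h2 := h k2
            simp only [dirVec, if_pos rfl, if_neg n1, if_neg n2, if_neg hc, if_true,
              eq_self_iff_true] at h2
            rcases b2 <;> simp at h2
          have n1 : ¬ k2 = k1 := fun hh => e12 hh.symm
          have n2 : ¬ k2 = ku := fun hh => e12 (c1.trans hh.symm)
          have h2 := h k2
          simp only [dirVec, if_pos rfl, if_neg n1, if_neg n2, if_pos hk2, if_true,
            eq_self_iff_true] at h2
          have hb2 : b2 = bw := by rcases b2 <;> rcases bw <;> simp at h2 ⊢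
          rw [c1, hb1, hk2, hb2]; exact ⟨rfl, rfl⟩
        · by_cases c1' : k1 = kw
          · right
            have h1 := h k1
            simp only [dirVec, if_pos rfl, if_neg e12, if_neg c1, if_pos c1', if_true,
              eq_self_iff_true] at h1
            have hb1 : b1 = !bw := by rcases b1 <;> rcases bw <;> simp at h1 ⊢
            have hk2 : k2 = ku := by
              by_contra hc
              have n1 : ¬ ku = k1 := fun hh => hkk (hh.trans c1')
              have n2 : ¬ ku = k2 := fun hh => hc hh.symm
              have h2 := h ku
              simp only [dirVec, if_pos rfl, if_neg n1, if_neg n2, if_neg hkk, if_true,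
                eq_self_iff_true] at h2
              rcases bu <;> simp at h2
            have n1 : ¬ k2 = k1 := fun hh => e12 hh.symm
            have n2 : ¬ k2 = kw := fun hh => hkk (hk2.symm.trans hh)
            have h2 := h k2
            simp only [dirVec, if_pos rfl, if_neg n1, if_pos hk2, if_neg n2, if_true,
              eq_self_iff_true] at h2
            have hb2 : b2 = !bu := by rcases b2 <;> rcases bu <;> simp at h2 ⊢
            constructor <;> simp [negDir, c1', hb1, hk2, hb2]
          · exfalso
            have h1 := h k1
            simp only [dirVec, if_pos rfl, if_neg e12, if_neg c1, if_neg c1', if_true,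
              eq_self_iff_true] at h1
            rcases b1 <;> simp at h1

end Key

section Main
variable {d : ℕ}

private def cA (d : ℕ) : Cell d (fun _ => 5) := fun _ => 0

private def cB (u w : Dir d) : Cell d (fun _ => 5) :=
  fun k => ((dirVec w k - dirVec u k : ℤ) : ZMod 5)

private def ci0 (u : Dir d) : Cell d (fun _ => 5) :=
  fun k => ((-(dirVec u k) : ℤ) : ZMod 5)

private def cj0 (w : Dir d) : Cell d (fun _ => 5) :=
  fun k => ((dirVec w k : ℤ) : ZMod 5)

private noncomputable def cx (u w : Dir d) (p q : ℝ) : Cell d (fun _ => 5) → ℝ :=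
  fun i => if i = cA d then p else if i = cB u w then q else 0

private lemma cast5 {a b : ℤ} (h1 : a - b ≤ 4) (h2 : -4 ≤ a - b)
    (h : ((a : ZMod 5) = (b : ZMod 5))) : a = b := by
  have h' : ((a - b : ℤ) : ZMod 5) = 0 := by push_cast; rw [h, sub_self]
  rw [ZMod.intCast_zmod_eq_zero_iff_dvd] at h'
  omega

private lemma hit_unique {i c : Cell d (fun _ => 5)} {v1 : Dir d}
    (hA : cellAdd i (dirVec v1) = c) (v : Dir d) :
    cellAdd i (dirVec v) = c ↔ v = v1 := by
  constructor
  · intro hv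
    refine dirVec_inj fun k => ?_
    have h1 : cellAdd i (dirVec v) k = cellAdd i (dirVec v1) k := by rw [hv, hA]
    simp only [cellAdd] at h1
    have h2 : ((dirVec v k : ℤ) : ZMod 5) = ((dirVec v1 k : ℤ) : ZMod 5) :=
      add_left_cancel h1
    have b1 := dirVec_bound v k
    have b2 := dirVec_bound v1 k
    exact cast5 (by omega) (by omega) h2
  · rintro rfl; exact hA

private lemma cell_contrib {u w : Dir d} (hne : u ≠ w) (hneg : u ≠ negDir w)
    {Q : Set ℝ} (h0 : (0:ℝ) ∈ Q) {g : (Dir d → ℝ) → ℝ}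
    (hmono : ∀ (v : Dir d) (r : ℝ), r ∈ Q → g (monomer v r) = 0)
    {p q : ℝ} (hp : p ∈ Q) (hq : q ∈ Q) (i : Cell d (fun _ => 5)) :
    g (nbhd (cx u w p q) i) =
      (if i = ci0 u then g (dimer u p w q) else 0) +
      (if i = cj0 w then g (dimer (negDir w) p (negDir u) q) else 0) := by
  have hAi0 : cellAdd (ci0 u) (dirVec u) = cA d := by
    funext k; simp only [cellAdd, ci0, cA]; push_cast; ring
  have hBi0 : cellAdd (ci0 u) (dirVec w) = cB u w := by
    funext k; simp only [cellAdd, ci0, cB]; push_cast; ring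
  have hAj0 : cellAdd (cj0 w) (dirVec (negDir w)) = cA d := by
    funext k; simp only [cellAdd, cj0, cA, dirVec_negDir]; push_cast; ring
  have hBj0 : cellAdd (cj0 w) (dirVec (negDir u)) = cB u w := by
    funext k; simp only [cellAdd, cj0, cB, dirVec_negDir]; push_cast; ring
  have hij : ci0 u ≠ cj0 w := by
    intro hh
    apply hneg
    have hvec : ∀ k, -(dirVec u k) = dirVec w k := by
      intro k
      have e1 : ((-(dirVec u k) : ℤ) : ZMod 5) = ((dirVec w k : ℤ) : ZMod 5) :=
        congrFun hh k
      have b1 := dirVec_bound u k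
      have b2 := dirVec_bound w k
      exact cast5 (by omega) (by omega) e1
    have : negDir u = w := dirVec_inj fun k => by rw [dirVec_negDir]; exact hvec k
    rw [← this, negDir_negDir]
  by_cases hi : i = ci0 u
  · subst hi
    rw [if_pos rfl, if_neg hij]
    have hnb : nbhd (cx u w p q) (ci0 u) = dimer u p w q := by
      funext v
      simp only [nbhd, cx, dimer]
      rw [if_congr (hit_unique hAi0 v) rfl rfl, if_congr (hit_unique hBi0 v) rfl rfl]
    rw [hnb]; ring
  · by_cases hj : i = cj0 w
    · subst hj
      rw [if_neg (fun hh => hij hh.symm), if_pos rfl]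
      have hnb : nbhd (cx u w p q) (cj0 w) = dimer (negDir w) p (negDir u) q := by
        funext v
        simp only [nbhd, cx, dimer]
        rw [if_congr (hit_unique hAj0 v) rfl rfl, if_congr (hit_unique hBj0 v) rfl rfl]
      rw [hnb]; ring
    · rw [if_neg hi, if_neg hj]
      by_cases hA : ∃ v, cellAdd i (dirVec v) = cA d
      · obtain ⟨v1, hv1⟩ := hA
        by_cases hB : ∃ v, cellAdd i (dirVec v) = cB u w
        · obtain ⟨v2, hv2⟩ := hB
          exfalso
          have heq : ∀ k, dirVec v1 k - dirVec v2 k = dirVec u k - dirVec w k := by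
            intro k
            have e1 : i k + ((dirVec v1 k : ℤ) : ZMod 5) = 0 := congrFun hv1 k
            have e2 : i k + ((dirVec v2 k : ℤ) : ZMod 5)
                = ((dirVec w k - dirVec u k : ℤ) : ZMod 5) := congrFun hv2 k
            have e3 : ((dirVec v2 k - dirVec v1 k : ℤ) : ZMod 5)
                = ((dirVec w k - dirVec u k : ℤ) : ZMod 5) := by
              push_cast at e1 e2 ⊢
              linear_combination e2 - e1
            have b1 := dirVec_bound v1 k
            have b2 := dirVec_bound v2 k
            have b3 := dirVec_bound u k
            have b4 := dirVec_bound w k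
            have := cast5 (by omega) (by omega) e3
            omega
          rcases key hne hneg heq with ⟨hv1u, hv2w⟩ | ⟨hv1w, hv2u⟩
          · apply hi
            funext k
            have e1 : i k + ((dirVec v1 k : ℤ) : ZMod 5) = 0 := congrFun hv1 k
            rw [hv1u] at e1
            show i k = ((-(dirVec u k) : ℤ) : ZMod 5)
            push_cast at e1 ⊢
            linear_combination e1
          · apply hj
            funext k
            have e1 : i k + ((dirVec v1 k : ℤ) : ZMod 5) = 0 := congrFun hv1 k
            rw [hv1w] at e1
            rw [dirVec_negDir] at e1
            show i k = ((dirVec w k : ℤ) : ZMod 5)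
            push_cast at e1 ⊢
            linear_combination e1
        · push_neg at hB
          have hnb : nbhd (cx u w p q) i = monomer v1 p := by
            funext v
            simp only [nbhd, cx, monomer]
            rw [if_congr (hit_unique hv1 v) rfl rfl, if_neg (hB v)]
          rw [hnb, hmono v1 p hp]; ring
      · push_neg at hA
        by_cases hB : ∃ v, cellAdd i (dirVec v) = cB u w
        · obtain ⟨v2, hv2⟩ := hB
          have hnb : nbhd (cx u w p q) i = monomer v2 q := by
            funext v
            simp only [nbhd, cx, monomer]
            rw [if_neg (hA v), if_congr (hit_unique hv2 v) rfl rfl]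
          rw [hnb, hmono v2 q hq]; ring
        · push_neg at hB
          have hnb : nbhd (cx u w p q) i = monomer none 0 := by
            funext v
            simp only [nbhd, cx, monomer]
            rw [if_neg (hA v), if_neg (hB v)]
            simp
          rw [hnb, hmono none 0 h0]; ring

end Main

/-- A perturbation takes opposite values on matching dimers:
`g(D(u:p, w:q)) = -g(D(-w:p, -u:q))` for every pair `{u,w} ∈ Ω`. -/
theorem perturbation_matching_dimers
    (d : ℕ) (hd : 1 ≤ d) (Q : Set ℝ) (h0 : (0 : ℝ) ∈ Q)
    (g : (Dir d → ℝ) → ℝ) (hg : Perturbation Q g)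
    (u w : Dir d) (huw : OmegaPair u w ∨ OmegaPair w u)
    (p q : ℝ) (hp : p ∈ Q) (hq : q ∈ Q) :
    g (dimer u p w q) = - g (dimer (negDir w) p (negDir u) q) := by
  have hnw : u ≠ w ∧ u ≠ negDir w := by
    rcases huw with (⟨h1, h2⟩ | ⟨h1, h2, h3, h4⟩) | (⟨h1, h2⟩ | ⟨h1, h2, h3, h4⟩)
    · subst h1
      refine ⟨fun hh => h2 hh.symm, fun hh => ?_⟩
      rcases w with _ | ⟨k, b⟩
      · exact h2 rfl
      · simp [negDir] at hh
    · exact ⟨h3, h4⟩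
    · subst h1
      exact ⟨h2, by simpa [negDir] using h2⟩
    · refine ⟨fun hh => h3 hh.symm, fun hh => h4 ?_⟩
      rw [hh, negDir_negDir]
  obtain ⟨hne, hneg⟩ := hnw
  obtain ⟨hmono, hsum⟩ := hg
  haveI : ∀ k : Fin d, NeZero ((fun _ => 5 : Fin d → ℕ) k) := fun _ => ⟨by norm_num⟩
  have hx : ∀ i, cx u w p q i ∈ Q := by
    intro i
    simp only [cx]
    split_ifs <;> assumption
  have hz : ∑ i : Cell d (fun _ => 5), g (nbhd (cx u w p q) i) = 0 :=
    hsum (fun _ => 5) (fun _ => by norm_num) (cx u w p q) hx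
  have hsplit : ∑ i : Cell d (fun _ => 5), g (nbhd (cx u w p q) i)
      = g (dimer u p w q) + g (dimer (negDir w) p (negDir u) q) := by
    rw [Finset.sum_congr rfl (fun i _ => cell_contrib hne hneg h0 hmono hp hq i),
      Finset.sum_add_distrib, Finset.sum_ite_eq' Finset.univ,
      Finset.sum_ite_eq' Finset.univ]
    simp
  rw [hsplit] at hz
  linarith
end

section
/- For one-dimensional binary CAs (d = 1, Q = {0,1}, neighborhood of size 3): there are exactly 3 split functions (the left shift, the identity, and the right shift local rules), and every number-conserving local rule has the form h + a·g₁ where h is one of the 3 split functions, a ∈ ℝ, and g₁ is the local function with g₁(0,1,1) = 1, g₁(1,1,0) = -1, and g₁ = 0 on all other triples. -/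
/-- A one-dimensional local rule over states `Fin m` is number-conserving if on
every cyclic configuration of every length `n > 4` the induced global map
preserves the sum of states. -/
def NC1 {m : ℕ} (f : Fin m → Fin m → Fin m → Fin m) : Prop :=
  ∀ (n : ℕ) (hn : 4 < n) (x : ZMod n → Fin m),
    haveI : NeZero n := ⟨by omega⟩
    ∑ i, (f (x (i - 1)) (x i) (x (i + 1)) : ℕ) = ∑ i, (x i : ℕ)

/-- Split function for one-dimensional binary CAs: determined additively by its
monomer values, which lie in `{0,1}` and sum to `1`. -/
def Split1 (h : Fin 2 → Fin 2 → Fin 2 → ℝ) : Prop :=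
  (∀ p q r, h p q r = h p 0 0 + h 0 q 0 + h 0 0 r) ∧
  h 1 0 0 + h 0 1 0 + h 0 0 1 = 1 ∧
  h 1 0 0 ∈ ({0, 1} : Set ℝ) ∧ h 0 1 0 ∈ ({0, 1} : Set ℝ) ∧
  h 0 0 1 ∈ ({0, 1} : Set ℝ)

lemma split_proj_p : Split1 (fun p _ _ => (p.val : ℝ)) :=
  ⟨fun p q r => by simp, by simp, by simp, by simp, by simp⟩

lemma split_proj_q : Split1 (fun _ q _ => (q.val : ℝ)) :=
  ⟨fun p q r => by simp, by simp, by simp, by simp, by simp⟩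

lemma split_proj_r : Split1 (fun _ _ r => (r.val : ℝ)) :=
  ⟨fun p q r => by simp, by simp, by simp, by simp, by simp⟩

lemma nc_aux (b c d e x y : ℕ)
    (E1 : c + e + 0 + 0 + b = 1) (E2 : d + y + e + 0 + b = 2)
    (E4 : d + 1 + 1 + y + x = 4) (E6 : c + x + c + e + b = 2)
    (L1 : b < 2) (L2 : c < 2) (L3 : d < 2) (L4 : e < 2) (L5 : x < 2) (L6 : y < 2) :
    (b = 0 ∧ c = 1 ∧ d = 1 ∧ e = 0 ∧ x = 0 ∧ y = 1) ∨
    (b = 1 ∧ c = 0 ∧ d = 1 ∧ e = 0 ∧ x = 1 ∧ y = 0) ∨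
    (b = 1 ∧ c = 0 ∧ d = 0 ∧ e = 0 ∧ x = 1 ∧ y = 1) ∨
    (b = 0 ∧ c = 0 ∧ d = 1 ∧ e = 1 ∧ x = 1 ∧ y = 0) ∨
    (b = 0 ∧ c = 0 ∧ d = 0 ∧ e = 1 ∧ x = 1 ∧ y = 1) := by
  interval_cases b <;> interval_cases c <;> interval_cases d <;> interval_cases e <;>
    interval_cases x <;> interval_cases y <;> simp_all

set_option maxHeartbeats 2000000 in
/-- For one-dimensional binary CAs there are exactly `3` split functions (the
right shift, the identity and the left shift), and every number-conserving
local rule is of the form `h + a·g₁` with `h` a split function, `a ∈ ℝ`, and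
`g₁` the basic perturbation with `g₁(0,1,1) = 1`, `g₁(1,1,0) = -1` and `g₁ = 0`
elsewhere. -/
theorem binary_1d_decomposition
    (g₁ : Fin 2 → Fin 2 → Fin 2 → ℝ)
    (hg₁ : ∀ p q r : Fin 2, g₁ p q r =
      if (p, q, r) = (0, 1, 1) then 1 else if (p, q, r) = (1, 1, 0) then -1 else 0) :
    (∀ h : Fin 2 → Fin 2 → Fin 2 → ℝ, Split1 h ↔
      (h = fun p _ _ => (p.val : ℝ)) ∨ (h = fun _ q _ => (q.val : ℝ)) ∨
      (h = fun _ _ r => (r.val : ℝ))) ∧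
    (∀ f : Fin 2 → Fin 2 → Fin 2 → Fin 2, NC1 f →
      ∃ (h : Fin 2 → Fin 2 → Fin 2 → ℝ) (a : ℝ), Split1 h ∧
        ∀ p q r : Fin 2, ((f p q r : ℕ) : ℝ) = h p q r + a * g₁ p q r) := by
  constructor
  · -- characterization of split functions
    intro h
    constructor
    · rintro ⟨hadd, hsum, hp, hq, hr⟩
      simp only [Set.mem_insert_iff, Set.mem_singleton_iff] at hp hq hr
      have h000 : h 0 0 0 = 0 := by have := hadd 0 0 0; linarith
      rcases hp with hp | hp <;> rcases hq with hq | hq <;> rcases hr with hr | hr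
      · exfalso; rw [hp, hq, hr] at hsum; norm_num at hsum
      · right; right; funext p q r; rw [hadd p q r]
        fin_cases p <;> fin_cases q <;> fin_cases r <;> simp [hp, hq, hr, h000]
      · right; left; funext p q r; rw [hadd p q r]
        fin_cases p <;> fin_cases q <;> fin_cases r <;> simp [hp, hq, hr, h000]
      · exfalso; rw [hp, hq, hr] at hsum; norm_num at hsum
      · left; funext p q r; rw [hadd p q r]
        fin_cases p <;> fin_cases q <;> fin_cases r <;> simp [hp, hq, hr, h000]
      · exfalso; rw [hp, hq, hr] at hsum; norm_num at hsum
      · exfalso; rw [hp, hq, hr] at hsum; norm_num at hsum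
      · exfalso; rw [hp, hq, hr] at hsum; norm_num at hsum
    · rintro (rfl | rfl | rfl)
      · exact split_proj_p
      · exact split_proj_q
      · exact split_proj_r
  · -- decomposition of number-conserving rules
    intro f hf
    have gv : ∀ p q r : Fin 2, ¬((p,q,r) = (0,1,1) ∨ (p,q,r) = (1,1,0)) → g₁ p q r = 0 := by
      intro p q r hpr
      rw [hg₁]
      push_neg at hpr
      rw [if_neg hpr.1, if_neg hpr.2]
    have g011 : g₁ 0 1 1 = 1 := by rw [hg₁]; norm_num
    have g110 : g₁ 1 1 0 = -1 := by rw [hg₁]; norm_num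
    have g000 : g₁ 0 0 0 = 0 := gv _ _ _ (by decide)
    have g001 : g₁ 0 0 1 = 0 := gv _ _ _ (by decide)
    have g010 : g₁ 0 1 0 = 0 := gv _ _ _ (by decide)
    have g100 : g₁ 1 0 0 = 0 := gv _ _ _ (by decide)
    have g101 : g₁ 1 0 1 = 0 := gv _ _ _ (by decide)
    have g111 : g₁ 1 1 1 = 0 := gv _ _ _ (by decide)
    have key : ∀ v : Fin 5 → Fin 2,
        ∑ i : Fin 5, (f (v (i - 1)) (v i) (v (i + 1)) : ℕ) = ∑ i : Fin 5, ((v i : Fin 2) : ℕ) :=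
      fun v => hf 5 (by norm_num) v
    have e0 := key ![0,0,0,0,0]
    have e1 := key ![1,0,0,0,0]
    have e2 := key ![1,1,0,0,0]
    have e4 := key ![1,1,1,1,0]
    have e5 := key ![1,1,1,1,1]
    have e6 := key ![1,0,1,0,0]
    simp [Fin.sum_univ_five, show ((-1:Fin 5)) = 4 from rfl] at e0 e1 e2 e4 e5 e6
    have l001 := (f 0 0 1).isLt
    have l010 := (f 0 1 0).isLt
    have l011 := (f 0 1 1).isLt
    have l100 := (f 1 0 0).isLt
    have l101 := (f 1 0 1).isLt
    have l110 := (f 1 1 0).isLt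
    have h111 : (f 1 1 1 : ℕ) = 1 := by omega
    rw [e0] at e1 e2
    rw [h111] at e4
    have main := nc_aux _ _ _ _ _ _ e1 e2 e4 e6 l001 l010 l011 l100 l101 l110
    rcases main with ⟨h1,h2,h3,h4,h5,h6⟩ | ⟨h1,h2,h3,h4,h5,h6⟩ |
      ⟨h1,h2,h3,h4,h5,h6⟩ | ⟨h1,h2,h3,h4,h5,h6⟩ | ⟨h1,h2,h3,h4,h5,h6⟩
    · exact ⟨_, 0, split_proj_q, fun p q r => by
        fin_cases p <;> fin_cases q <;> fin_cases r <;>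
          simp [g000, g001, g010, g011, g100, g101, g110, g111, h1, h2, h3, h4, h5, h6, e0, h111]⟩
    · exact ⟨_, 0, split_proj_r, fun p q r => by
        fin_cases p <;> fin_cases q <;> fin_cases r <;>
          simp [g000, g001, g010, g011, g100, g101, g110, g111, h1, h2, h3, h4, h5, h6, e0, h111]⟩
    · exact ⟨_, -1, split_proj_r, fun p q r => by
        fin_cases p <;> fin_cases q <;> fin_cases r <;>
          simp [g000, g001, g010, g011, g100, g101, g110, g111, h1, h2, h3, h4, h5, h6, e0, h111]⟩
    · exact ⟨_, 1, split_proj_p, fun p q r => by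
        fin_cases p <;> fin_cases q <;> fin_cases r <;>
          simp [g000, g001, g010, g011, g100, g101, g110, g111, h1, h2, h3, h4, h5, h6, e0, h111]⟩
    · exact ⟨_, 0, split_proj_p, fun p q r => by
        fin_cases p <;> fin_cases q <;> fin_cases r <;>
          simp [g000, g001, g010, g011, g100, g101, g110, g111, h1, h2, h3, h4, h5, h6, e0, h111]⟩
end

section
/- There are exactly 5 number-conserving elementary cellular automata (local rules f : {0,1}³ → {0,1} whose induced global maps on cyclic sequences of length n > 4 preserve the sum of states): ECA rules 170, 184, 204, 226, and 240 (the left shift, traffic-right, identity, traffic-left, and right shift rules). -/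
/-- The Wolfram number of an elementary cellular automaton rule. -/
def wolfram (f : Fin 2 → Fin 2 → Fin 2 → Fin 2) : ℕ :=
  ∑ a : Fin 2, ∑ b : Fin 2, ∑ c : Fin 2,
    (f a b c : ℕ) * 2 ^ (4 * (a : ℕ) + 2 * (b : ℕ) + (c : ℕ))

lemma sum_shift {n : ℕ} [NeZero n] (g : ZMod n → ℕ) (c : ZMod n) :
    ∑ i, g (i + c) = ∑ i, g i :=
  Fintype.sum_equiv (Equiv.addRight c) _ _ (fun _ => rfl)

set_option maxRecDepth 40000 in
lemma nc5_wolfram (f : Fin 2 → Fin 2 → Fin 2 → Fin 2)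
    (h : ∀ x : ZMod 5 → Fin 2,
      ∑ i, (f (x (i - 1)) (x i) (x (i + 1)) : ℕ) = ∑ i, (x i : ℕ)) :
    wolfram f = 170 ∨ wolfram f = 184 ∨ wolfram f = 204 ∨ wolfram f = 226 ∨
      wolfram f = 240 := by
  revert h; revert f; decide

set_option maxRecDepth 40000 in
lemma w170 (f : Fin 2 → Fin 2 → Fin 2 → Fin 2) (h : wolfram f = 170) :
    ∀ a b c, (f a b c : ℕ) = (c : ℕ) := by revert h; revert f; decide

set_option maxRecDepth 40000 in
lemma w240 (f : Fin 2 → Fin 2 → Fin 2 → Fin 2) (h : wolfram f = 240) :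
    ∀ a b c, (f a b c : ℕ) = (a : ℕ) := by revert h; revert f; decide

set_option maxRecDepth 40000 in
lemma w204 (f : Fin 2 → Fin 2 → Fin 2 → Fin 2) (h : wolfram f = 204) :
    ∀ a b c, (f a b c : ℕ) = (b : ℕ) := by revert h; revert f; decide

set_option maxRecDepth 40000 in
lemma w184 (f : Fin 2 → Fin 2 → Fin 2 → Fin 2) (h : wolfram f = 184) :
    ∀ a b c, (f a b c : ℕ) + (a : ℕ) * (b : ℕ) = (a : ℕ) + (b : ℕ) * (c : ℕ) := by
  revert h; revert f; decide

set_option maxRecDepth 40000 in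
lemma w226 (f : Fin 2 → Fin 2 → Fin 2 → Fin 2) (h : wolfram f = 226) :
    ∀ a b c, (f a b c : ℕ) + (b : ℕ) * (c : ℕ) = (c : ℕ) + (a : ℕ) * (b : ℕ) := by
  revert h; revert f; decide

/-- There are exactly `5` number-conserving elementary cellular automata:
rules `170`, `184`, `204`, `226` and `240`. -/
theorem numberConserving_eca (f : Fin 2 → Fin 2 → Fin 2 → Fin 2) :
    NC1 f ↔ wolfram f ∈ ({170, 184, 204, 226, 240} : Set ℕ) := by
  constructor
  · intro h
    have h5 := h 5 (by norm_num)
    simpa [Set.mem_insert_iff, Set.mem_singleton_iff] using nc5_wolfram f h5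
  · intro hw
    intro n hn x
    haveI : NeZero n := ⟨by omega⟩
    have hs1 : ∑ i : ZMod n, (x (i + 1) : ℕ) = ∑ i : ZMod n, (x i : ℕ) :=
      sum_shift (fun i => (x i : ℕ)) 1
    have hsm1 : ∑ i : ZMod n, (x (i - 1) : ℕ) = ∑ i : ZMod n, (x i : ℕ) := by
      have := sum_shift (fun i => (x i : ℕ)) (-1)
      simpa [sub_eq_add_neg] using this
    have hprod : ∑ i : ZMod n, (x i : ℕ) * (x (i + 1) : ℕ)
        = ∑ i : ZMod n, (x (i - 1) : ℕ) * (x i : ℕ) := by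
      have := sum_shift (fun i => (x (i - 1) : ℕ) * (x i : ℕ)) 1
      simpa [add_sub_cancel_right] using this
    simp only [Set.mem_insert_iff, Set.mem_singleton_iff] at hw
    rcases hw with hw | hw | hw | hw | hw
    · simp only [w170 f hw]; exact hs1
    · have key := w184 f hw
      have : (∑ i : ZMod n, (f (x (i - 1)) (x i) (x (i + 1)) : ℕ))
            + ∑ i : ZMod n, (x (i - 1) : ℕ) * (x i : ℕ)
          = (∑ i : ZMod n, (x (i - 1) : ℕ))
            + ∑ i : ZMod n, (x i : ℕ) * (x (i + 1) : ℕ) := by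
        rw [← Finset.sum_add_distrib, ← Finset.sum_add_distrib]
        exact Finset.sum_congr rfl fun i _ => key _ _ _
      rw [hprod, hsm1] at this
      omega
    · simp only [w204 f hw]
    · have key := w226 f hw
      have : (∑ i : ZMod n, (f (x (i - 1)) (x i) (x (i + 1)) : ℕ))
            + ∑ i : ZMod n, (x i : ℕ) * (x (i + 1) : ℕ)
          = (∑ i : ZMod n, (x (i + 1) : ℕ))
            + ∑ i : ZMod n, (x (i - 1) : ℕ) * (x i : ℕ) := by
        rw [← Finset.sum_add_distrib, ← Finset.sum_add_distrib]
        exact Finset.sum_congr rfl fun i _ => key _ _ _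
      rw [hprod, hs1] at this
      omega
    · simp only [w240 f hw]; exact hsm1
end

section
/- For two-dimensional binary CAs with the von Neumann neighborhood (d = 2, Q = {0,1}): there are exactly 5 split functions, each equal to one of the projections onto the 5 neighborhood positions (the identity rule and the four shift rules). -/
/-- For two-dimensional binary CAs with the von Neumann neighborhood there are
exactly `5` split functions, namely the projections onto the `5` neighborhood
positions (the identity rule and the four shift rules). -/
theorem binary_2d_split_functions :
    (∀ v : Dir 2, SplitFunction ({0, 1} : Set ℝ) (fun N => N v)) ∧
    (∀ h : (Dir 2 → ℝ) → ℝ, SplitFunction ({0, 1} : Set ℝ) h →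
      ∃! v : Dir 2, ∀ N : Dir 2 → ℝ,
        (∀ u, N u ∈ ({0, 1} : Set ℝ)) → h N = N v) ∧
    Fintype.card (Dir 2) = 5 := by
  refine ⟨?_, ?_, ?_⟩
  · intro v
    refine ⟨?_, ?_, ?_⟩
    · intro u q hq
      simp only [monomer]
      split <;> simp_all
    · intro q hq
      simp [monomer]
    · intro N hN
      simp [monomer]
  · intro h ⟨hS1, hS2, hS3⟩
    have hmono0 : ∀ v : Dir 2, monomer v (0:ℝ) = monomer none 0 := by
      intro v; funext u; simp [monomer]
    have h0 : h (monomer (none : Dir 2) 0) = 0 := by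
      have hs := hS2 0 (by simp)
      rw [Finset.sum_congr rfl (fun v _ => by rw [hmono0 v])] at hs
      simp only [Finset.sum_const, Finset.card_univ, nsmul_eq_mul,
        Fintype.card_option, Fintype.card_prod, Fintype.card_fin,
        Fintype.card_bool] at hs
      push_cast at hs
      linarith
    have ha01 : ∀ v : Dir 2, h (monomer v 1) = 0 ∨ h (monomer v 1) = 1 := by
      intro v
      have := hS1 v 1 (by simp)
      simpa [Set.mem_insert_iff] using this
    have hsum1 : ∑ v : Dir 2, h (monomer v 1) = 1 := hS2 1 (by simp)
    have hex : ∃ v0 : Dir 2, h (monomer v0 1) = 1 := by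
      by_contra hc
      push_neg at hc
      have hall : ∀ v : Dir 2, h (monomer v 1) = 0 := fun v =>
        (ha01 v).resolve_right (hc v)
      rw [Finset.sum_congr rfl (fun v _ => hall v)] at hsum1
      simp at hsum1
    obtain ⟨v0, hv0⟩ := hex
    have hrest : ∀ v : Dir 2, v ≠ v0 → h (monomer v 1) = 0 := by
      intro v hv
      have hsplit : h (monomer v0 1) +
          ∑ u ∈ Finset.univ.erase v0, h (monomer u 1) = 1 := by
        rw [Finset.add_sum_erase Finset.univ (fun v => h (monomer v 1))
          (Finset.mem_univ v0)]
        exact hsum1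
      rw [hv0] at hsplit
      have hz : ∑ u ∈ Finset.univ.erase v0, h (monomer u 1) = 0 := by linarith
      have hzz := (Finset.sum_eq_zero_iff_of_nonneg (fun u _ => by
        rcases ha01 u with h1 | h1 <;> simp [h1])).mp hz
      exact hzz v (Finset.mem_erase.mpr ⟨hv, Finset.mem_univ v⟩)
    have key : ∀ N : Dir 2 → ℝ, (∀ u, N u ∈ ({0, 1} : Set ℝ)) → h N = N v0 := by
      intro N hN
      rw [hS3 N hN]
      have hterm : ∀ v : Dir 2, h (monomer v (N v)) = if v = v0 then N v else 0 := by
        intro v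
        rcases hN v with h1 | h1
        · rw [h1, hmono0, h0]; simp
        · rw [Set.mem_singleton_iff] at h1
          rw [h1]
          by_cases hv : v = v0
          · simp [hv, hv0]
          · simp [hv, hrest v hv]
      rw [Finset.sum_congr rfl (fun v _ => hterm v)]
      simp
    refine ⟨v0, key, ?_⟩
    intro v1 hv1
    have h1 := hv1 (monomer v0 1) (by
      intro u; simp only [monomer]; split <;> simp)
    have h2 := key (monomer v0 1) (by
      intro u; simp only [monomer]; split <;> simp)
    rw [h2] at h1
    by_contra hne
    simp only [monomer, if_pos rfl, if_neg hne] at h1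
    norm_num at h1
  · simp [Fintype.card_option]
end

section
/- For one-dimensional three-state CAs (d = 1, Q = {0,1,2}): there are exactly C(3,1)·C(4,2) = 18 split functions, and there are exactly 144 number-conserving local rules f : Q³ → Q (i.e., rules for which Σᵢ f(x_{i-1},x_i,x_{i+1}) = Σᵢ xᵢ for all cyclic configurations of every length n > 4). -/
/-- Split function for one-dimensional three-state CAs: determined additively
by its monomer values, which lie in `{0,1,2}`, with the state-`1` monomer
values summing to `1` and the state-`2` monomer values summing to `2`. -/
def Split3 (h : Fin 3 → Fin 3 → Fin 3 → ℝ) : Prop :=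
  (∀ p q r, h p q r = h p 0 0 + h 0 q 0 + h 0 0 r) ∧
  (∀ q : Fin 3, h q 0 0 ∈ ({0, 1, 2} : Set ℝ) ∧ h 0 q 0 ∈ ({0, 1, 2} : Set ℝ) ∧
    h 0 0 q ∈ ({0, 1, 2} : Set ℝ)) ∧
  h 1 0 0 + h 0 1 0 + h 0 0 1 = 1 ∧
  h 2 0 0 + h 0 2 0 + h 0 0 2 = 2

/-! ### Auxiliary machinery -/

section Aux

/-- The basic six-cell identity satisfied by any number-conserving rule. -/
lemma eq6 (f : Fin 3 → Fin 3 → Fin 3 → Fin 3) (hf : NC1 f) (p q r : Fin 3) :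
    (f 0 p q : ℕ) + f p q r + f q r 0 + f r 0 0 + f 0 0 0 + f 0 0 p
      = (p : ℕ) + q + r := by
  have h := hf 6 (by norm_num) ![p, q, r, 0, 0, 0]
  rw [show ∀ y : ZMod 6 → ℕ, ∑ i, y i = ∑ i : Fin 6, y i from fun _ => rfl,
      show ∀ y : ZMod 6 → ℕ, ∑ i, y i = ∑ i : Fin 6, y i from fun _ => rfl] at h
  rw [Fin.sum_univ_six, Fin.sum_univ_six] at h
  exact h

/-- The local (finitary) characterization of number conservation. -/
def C3 (f : Fin 3 → Fin 3 → Fin 3 → Fin 3) : Prop :=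
  ∀ p q r : Fin 3,
    (f p q r : ℕ) + f q r 0 + f r 0 0 = (f p q 0 : ℕ) + f q 0 0 + r

lemma C3_of_NC1 {f : Fin 3 → Fin 3 → Fin 3 → Fin 3} (hf : NC1 f) : C3 f := by
  intro p q r
  have h0 := eq6 f hf 0 0 0
  have h1 := eq6 f hf p q r
  have h2 := eq6 f hf p q 0
  omega

lemma NC1_of_C3 {f : Fin 3 → Fin 3 → Fin 3 → Fin 3} (hC : C3 f) : NC1 f := by
  intro n hn x
  haveI : NeZero n := ⟨by omega⟩
  set J : Fin 3 → Fin 3 → ℤ := fun a b => ((f a b 0 : ℕ) : ℤ) + ((f b 0 0 : ℕ) : ℤ) with hJ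
  have key : ∀ p q r : Fin 3,
      ((f p q r : ℕ) : ℤ) = J p q - J q r + ((r : ℕ) : ℤ) := by
    intro p q r
    have := hC p q r
    simp only [hJ]
    omega
  have hz : (∑ i : ZMod n, ((f (x (i - 1)) (x i) (x (i + 1)) : ℕ) : ℤ))
      = ∑ i : ZMod n, ((x i : ℕ) : ℤ) := by
    calc (∑ i : ZMod n, ((f (x (i - 1)) (x i) (x (i + 1)) : ℕ) : ℤ))
        = ∑ i : ZMod n, (J (x (i - 1)) (x i) - J (x i) (x (i + 1))
            + ((x (i + 1) : ℕ) : ℤ)) :=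
          Finset.sum_congr rfl fun i _ => key _ _ _
      _ = (∑ i : ZMod n, J (x (i - 1)) (x i)) - (∑ i : ZMod n, J (x i) (x (i + 1)))
            + ∑ i : ZMod n, ((x (i + 1) : ℕ) : ℤ) := by
          rw [Finset.sum_add_distrib, Finset.sum_sub_distrib]
      _ = ∑ i : ZMod n, ((x i : ℕ) : ℤ) := by
          have t1 : (∑ i : ZMod n, J (x (i + 1 - 1)) (x (i + 1)))
              = ∑ i : ZMod n, J (x (i - 1)) (x i) :=
            Equiv.sum_comp (Equiv.addRight (1 : ZMod n)) fun j => J (x (j - 1)) (x j)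
          have t2 : (∑ i : ZMod n, ((x (i + 1) : ℕ) : ℤ))
              = ∑ i : ZMod n, ((x i : ℕ) : ℤ) :=
            Equiv.sum_comp (Equiv.addRight (1 : ZMod n)) fun j => ((x j : ℕ) : ℤ)
          simp only [add_sub_cancel_right] at t1
          rw [t1, t2]
          ring
  exact_mod_cast hz

/-- Parameter space for number-conserving rules: the eight free boundary
values. -/
abbrev T8 := Fin 3 × Fin 3 × Fin 3 × Fin 3 × Fin 3 × Fin 3 × Fin 3 × Fin 3

def G (t : T8) : Fin 3 → Fin 3 → Fin 3 := fun p q =>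
  ![![0, t.1, t.2.1], ![t.2.2.1, t.2.2.2.1, t.2.2.2.2.1],
    ![t.2.2.2.2.2.1, t.2.2.2.2.2.2.1, t.2.2.2.2.2.2.2]] p q

def Qt (t : T8) : Prop :=
  ∀ p q r : Fin 3,
    (G t q r : ℕ) + G t r 0 ≤ (G t p q : ℕ) + G t q 0 + r ∧
    (G t p q : ℕ) + G t q 0 + r - ((G t q r : ℕ) + G t r 0) < 3

instance : DecidablePred Qt := fun t => by unfold Qt; infer_instance

def Ψ (t : {t : T8 // Qt t}) : Fin 3 → Fin 3 → Fin 3 → Fin 3 := fun p q r =>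
  ⟨(G t.1 p q : ℕ) + G t.1 q 0 + r - ((G t.1 q r : ℕ) + G t.1 r 0),
    (t.2 p q r).2⟩

lemma psi_slice (t : {t : T8 // Qt t}) (p q : Fin 3) :
    (Ψ t p q 0 : ℕ) = G t.1 p q := by
  have h1 := (t.2 p q 0).1
  have h0 : (G t.1 0 0 : ℕ) = 0 := rfl
  have hz : ((0 : Fin 3) : ℕ) = 0 := rfl
  show (G t.1 p q : ℕ) + G t.1 q 0 + ((0 : Fin 3) : ℕ)
      - ((G t.1 q 0 : ℕ) + G t.1 0 0) = G t.1 p q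
  omega

lemma C3_psi (t : {t : T8 // Qt t}) : C3 (Ψ t) := by
  intro p q r
  have e0 : (Ψ t p q r : ℕ)
      = (G t.1 p q : ℕ) + G t.1 q 0 + r - ((G t.1 q r : ℕ) + G t.1 r 0) := rfl
  have h1 := (t.2 p q r).1
  rw [e0, psi_slice t q r, psi_slice t r 0, psi_slice t p q, psi_slice t q 0]
  omega

lemma range_psi : {f : Fin 3 → Fin 3 → Fin 3 → Fin 3 | NC1 f} = Set.range Ψ := by
  ext f
  constructor
  · intro hf
    have hC := C3_of_NC1 hf
    have h0 : (f 0 0 0 : ℕ) = 0 := by have := hC 0 0 0; omega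
    set t : T8 := (f 0 1 0, f 0 2 0, f 1 0 0, f 1 1 0, f 1 2 0, f 2 0 0,
      f 2 1 0, f 2 2 0) with ht
    have hG : ∀ a b : Fin 3, (G t a b : ℕ) = f a b 0 := by
      intro a b
      fin_cases a <;> fin_cases b <;> simp [G, ht, h0]
    have hQt : Qt t := by
      intro p q r
      have hc := hC p q r
      have hlt := (f p q r).isLt
      refine ⟨?_, ?_⟩ <;> simp only [hG] <;> omega
    refine ⟨⟨t, hQt⟩, ?_⟩
    funext p q r
    apply Fin.ext
    show (G t p q : ℕ) + G t q 0 + r - ((G t q r : ℕ) + G t r 0) = f p q r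
    have hc := hC p q r
    simp only [hG]
    omega
  · rintro ⟨t, rfl⟩
    exact NC1_of_C3 (C3_psi t)

lemma psi_inj : Function.Injective Ψ := by
  intro t t' h
  have hG : ∀ p q, G t.1 p q = G t'.1 p q := fun p q =>
    Fin.ext (by rw [← psi_slice t p q, ← psi_slice t' p q, h])
  apply Subtype.ext
  obtain ⟨⟨a₁, a₂, a₃, a₄, a₅, a₆, a₇, a₈⟩, ht⟩ := t
  obtain ⟨⟨b₁, b₂, b₃, b₄, b₅, b₆, b₇, b₈⟩, ht'⟩ := t'
  simp only [Prod.mk.injEq]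
  exact ⟨hG 0 1, hG 0 2, hG 1 0, hG 1 1, hG 1 2, hG 2 0, hG 2 1, hG 2 2⟩

/-- Parameter space for split functions: the six monomer values. -/
abbrev T6 := Fin 3 × Fin 3 × Fin 3 × Fin 3 × Fin 3 × Fin 3

def Qs (t : T6) : Prop :=
  (t.1 : ℕ) + t.2.1 + t.2.2.1 = 1 ∧
  (t.2.2.2.1 : ℕ) + t.2.2.2.2.1 + t.2.2.2.2.2 = 2

instance : DecidablePred Qs := fun t => by unfold Qs; infer_instance

def A1 (t : T6) : Fin 3 → ℝ := fun p => ((![0, t.1, t.2.2.2.1] p : Fin 3) : ℕ)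
def B1 (t : T6) : Fin 3 → ℝ := fun q => ((![0, t.2.1, t.2.2.2.2.1] q : Fin 3) : ℕ)
def C1 (t : T6) : Fin 3 → ℝ := fun r => ((![0, t.2.2.1, t.2.2.2.2.2] r : Fin 3) : ℕ)

def Φ (t : {t : T6 // Qs t}) : Fin 3 → Fin 3 → Fin 3 → ℝ := fun p q r =>
  A1 t.1 p + B1 t.1 q + C1 t.1 r

lemma mem3 (v : Fin 3) : ((v : ℕ) : ℝ) ∈ ({0, 1, 2} : Set ℝ) := by
  fin_cases v <;> norm_num

lemma split_phi (t : {t : T6 // Qs t}) : Split3 (Φ t) := by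
  obtain ⟨t, hQ⟩ := t
  have hA0 : A1 t 0 = 0 := by simp [A1]
  have hB0 : B1 t 0 = 0 := by simp [B1]
  have hC0 : C1 t 0 = 0 := by simp [C1]
  refine ⟨?_, ?_, ?_, ?_⟩
  · intro p q r
    simp only [Φ, hA0, hB0, hC0]
    ring
  · intro q
    refine ⟨?_, ?_, ?_⟩ <;> simp only [Φ, hA0, hB0, hC0, add_zero, zero_add]
    exacts [mem3 _, mem3 _, mem3 _]
  · have h : ((t.1 : ℕ) : ℝ) + ((t.2.1 : ℕ) : ℝ) + ((t.2.2.1 : ℕ) : ℝ) = 1 := by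
      exact_mod_cast hQ.1
    simpa [Φ, A1, B1, C1] using h
  · have h : ((t.2.2.2.1 : ℕ) : ℝ) + ((t.2.2.2.2.1 : ℕ) : ℝ)
        + ((t.2.2.2.2.2 : ℕ) : ℝ) = 2 := by
      exact_mod_cast hQ.2
    simpa [Φ, A1, B1, C1] using h

lemma pick {v : ℝ} (hv : v ∈ ({0, 1, 2} : Set ℝ)) :
    ∃ m : Fin 3, ((m : ℕ) : ℝ) = v := by
  rcases hv with rfl | rfl | rfl
  exacts [⟨0, by norm_num⟩, ⟨1, by norm_num⟩, ⟨2, by norm_num⟩]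

lemma range_phi : {h : Fin 3 → Fin 3 → Fin 3 → ℝ | Split3 h} = Set.range Φ := by
  ext h
  constructor
  · rintro ⟨hadd, hmem, hs1, hs2⟩
    have h000 : h 0 0 0 = 0 := by have := hadd 0 0 0; linarith
    obtain ⟨a, ha⟩ := pick (hmem 1).1
    obtain ⟨b, hb⟩ := pick (hmem 1).2.1
    obtain ⟨c, hc⟩ := pick (hmem 1).2.2
    obtain ⟨d, hd⟩ := pick (hmem 2).1
    obtain ⟨e, he⟩ := pick (hmem 2).2.1
    obtain ⟨k, hk⟩ := pick (hmem 2).2.2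
    have hQ : Qs (a, b, c, d, e, k) := by
      constructor
      · have : ((a : ℕ) : ℝ) + (b : ℕ) + (c : ℕ) = 1 := by
          rw [ha, hb, hc]; exact hs1
        exact_mod_cast this
      · have : ((d : ℕ) : ℝ) + (e : ℕ) + (k : ℕ) = 2 := by
          rw [hd, he, hk]; exact hs2
        exact_mod_cast this
    refine ⟨⟨(a, b, c, d, e, k), hQ⟩, ?_⟩
    funext p q r
    have hA : ∀ p : Fin 3, A1 (a, b, c, d, e, k) p = h p 0 0 := by
      intro p; fin_cases p <;> simp [A1, h000, ha, hd]
    have hB : ∀ q : Fin 3, B1 (a, b, c, d, e, k) q = h 0 q 0 := by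
      intro q; fin_cases q <;> simp [B1, h000, hb, he]
    have hC : ∀ r : Fin 3, C1 (a, b, c, d, e, k) r = h 0 0 r := by
      intro r; fin_cases r <;> simp [C1, h000, hc, hk]
    show A1 _ p + B1 _ q + C1 _ r = h p q r
    rw [hA, hB, hC, ← hadd]
  · rintro ⟨t, rfl⟩
    exact split_phi t

lemma phi_inj : Function.Injective Φ := by
  intro t t' h
  have hA : ∀ p, A1 t.1 p = A1 t'.1 p := by
    intro p
    have := congrFun (congrFun (congrFun h p) 0) 0
    simpa [Φ, A1, B1, C1] using this
  have hB : ∀ q, B1 t.1 q = B1 t'.1 q := by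
    intro q
    have := congrFun (congrFun (congrFun h 0) q) 0
    simpa [Φ, A1, B1, C1] using this
  have hC : ∀ r, C1 t.1 r = C1 t'.1 r := by
    intro r
    have := congrFun (congrFun (congrFun h 0) 0) r
    simpa [Φ, A1, B1, C1] using this
  have cast_inj : ∀ {u v : Fin 3}, ((u : ℕ) : ℝ) = ((v : ℕ) : ℝ) → u = v := by
    intro u v huv
    exact Fin.ext (Nat.cast_injective huv)
  apply Subtype.ext
  obtain ⟨⟨a₁, a₂, a₃, a₄, a₅, a₆⟩, ht⟩ := t
  obtain ⟨⟨b₁, b₂, b₃, b₄, b₅, b₆⟩, ht'⟩ := t'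
  simp only [Prod.mk.injEq]
  refine ⟨cast_inj ?_, cast_inj ?_, cast_inj ?_, cast_inj ?_, cast_inj ?_,
    cast_inj ?_⟩
  · simpa [A1] using hA 1
  · simpa [B1] using hB 1
  · simpa [C1] using hC 1
  · simpa [A1] using hA 2
  · simpa [B1] using hB 2
  · simpa [C1] using hC 2

set_option maxHeartbeats 1000000 in
set_option maxRecDepth 100000 in
lemma card_T6 : Fintype.card {t : T6 // Qs t} = 18 := by decide

set_option maxHeartbeats 4000000 in
set_option maxRecDepth 100000 in
lemma card_T8 : Fintype.card {t : T8 // Qt t} = 144 := by decide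

end Aux

/-- For one-dimensional three-state CAs there are exactly
`C(3,1)·C(4,2) = 18` split functions and exactly `144` number-conserving local
rules. -/
theorem three_state_1d_counts :
    Set.ncard {h : Fin 3 → Fin 3 → Fin 3 → ℝ | Split3 h}
      = Nat.choose 3 1 * Nat.choose 4 2 ∧
    Nat.choose 3 1 * Nat.choose 4 2 = 18 ∧
    Set.ncard {f : Fin 3 → Fin 3 → Fin 3 → Fin 3 | NC1 f} = 144 := by
  have hchoose : Nat.choose 3 1 * Nat.choose 4 2 = 18 := by decide
  refine ⟨?_, hchoose, ?_⟩
  · rw [hchoose, range_phi, ← Nat.card_coe_set_eq,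
      Nat.card_range_of_injective phi_inj, Nat.card_eq_fintype_card, card_T6]
  · rw [range_psi, ← Nat.card_coe_set_eq,
      Nat.card_range_of_injective psi_inj, Nat.card_eq_fintype_card, card_T8]
end
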